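/- arXiv:2203.02111 — 2 statements merged into one kernel-verified Lean document; each statement's English description precedes it below -/
import Mathlib

section
/- Consider the homogeneous two-layer drive-response system: let A ∈ ℝ^{n×n}, H ∈ ℝ^{n×m}, C ∈ ℝ^{m×n}, h > 0, W^1, W^2, D^{2,1} ∈ ℝ^{N×N}, W̄ = [[W^1, 0], [D^{2,1}, W^2]], and Φ_s = I_{2N} ⊗ e^{Ah} + W̄ ⊗ 𝓗(h). Let λ ∈ ℂ be an eigenvalue of W^2 that is not an eigenvalue of W^1, let v(1), …, v(α) ∈ ℂ^{1×N} be a left Jordan chain of W^2 at λ, define v^{2,1}(1) = −v(1) D^{2,1}(W^1 − λ I_N)^{−1} and v^{2,1}(k) = (v^{2,1}(k−1) − v(k) D^{2,1})(W^1 − λ I_N)^{−1} for k = 2, …, α, and let ξ(1), …, ξ(γ) ∈ ℂ^{1×n} be a generalized left Jordan chain of E = e^{Ah} + λ·𝓗(h) about 𝓗(h) at θ ∈ ℂ (ξ(1)E = θ ξ(1) and ξ(k)E + ξ(k−1)𝓗(h) = θ ξ(k) for k ≥ 2). Then for every k with 1 ≤ k ≤ min(α, γ), the row vector η(k) = Σ_{l=1}^{k}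 [v^{2,1}(l), v(l)] ⊗ ξ(k+1−l) satisfies η(k)·Φ_s = θ·η(k). -/
/-!
Put `w(l) = [v^{2,1}(l), v(l)]` and let `X = ∑_{l=1}^k w(l)ᵀ ξ(k+1-l)`, so that `η(k) = vec Xᵀ`.
Since `vec Xᵀ (I ⊗ E + W̄ ⊗ 𝓗) = vec (X E + W̄ᵀ X 𝓗)ᵀ`, the claim is the Sylvester-type equation
`X e^{Ah} + W̄ᵀ X 𝓗(h) = θ X`. The recursion defining `v^{2,1}` (solvable because `W¹ - λ I` is
invertible) says exactly that the `w(l)` form a left Jordan chain of the block lower-triangular `W̄`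
at `λ`. Substituting `w(l) W̄ = λ w(l) + w(l-1)` and `ξ(j)(e^{Ah} + λ 𝓗) = θ ξ(j) - ξ(j-1) 𝓗` term
by term leaves `θ X` plus a telescoping sum of cross terms `w(l-1)ᵀ ξ(k+1-l) 𝓗`, which vanishes.
-/

open Matrix
open scoped Kronecker

/-- Matrix exponential of a real square matrix. -/
noncomputable def matExp {k : Type*} [Fintype k] [DecidableEq k]
    (A : Matrix k k ℝ) : Matrix k k ℝ := NormedSpace.exp A

/-- Entrywise integral `∫₀ʰ e^{Aτ} dτ`. -/
noncomputable def intExp {k : Type*} [Fintype k] [DecidableEq k]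
    (A : Matrix k k ℝ) (h : ℝ) : Matrix k k ℝ :=
  Matrix.of fun i j => ∫ τ in (0:ℝ)..h, matExp (τ • A) i j

/-- A real matrix regarded as a complex matrix entrywise. -/
def cmap {a b : Type*} (M : Matrix a b ℝ) : Matrix a b ℂ := M.map Complex.ofReal

/-- `θ` is a (complex) eigenvalue of the complex matrix `M`. -/
def IsEig {k : Type*} [Fintype k] (M : Matrix k k ℂ) (θ : ℂ) : Prop :=
  ∃ v : k → ℂ, v ≠ 0 ∧ M.mulVec v = θ • v

/-- Controllability of the discrete-time linear system `x(k+1) = F x(k) + G u(k)`: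
every target state can be reached from every initial state in finite time. -/
def Controllable {q r : Type*} [Fintype q] [Fintype r]
    (F : Matrix q q ℝ) (G : Matrix q r ℝ) : Prop :=
  ∀ x₀ xf : q → ℝ, ∃ (T : ℕ) (u : ℕ → r → ℝ) (x : ℕ → q → ℝ),
    x 0 = x₀ ∧ (∀ k, x (k + 1) = F.mulVec (x k) + G.mulVec (u k)) ∧ x T = xf

open Finset Function

section JordanChains

variable {R : Type*} [CommRing R] {I J : Type*} [Fintype I] [Fintype J]

def IsLeftJordanChain (M : Matrix I I R) (μ : R) (w : ℕ → I → R) (α : ℕ) : Prop :=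
  w 1 ᵥ* M = μ • w 1 ∧ ∀ k, 2 ≤ k → k ≤ α → w k ᵥ* M = μ • w k + w (k - 1)

def IsGenLeftJordanChain (E B : Matrix J J R) (θ : R) (ξ : ℕ → J → R) (γ : ℕ) : Prop :=
  ξ 1 ᵥ* E = θ • ξ 1 ∧ ∀ k, 2 ≤ k → k ≤ γ → ξ k ᵥ* E + ξ (k - 1) ᵥ* B = θ • ξ k

/-- The `I × J` matrix `X` with `vec Xᵀ = ∑_{l=1}^k w(l) ⊗ ξ(k+1-l)`, the paper's `η(k)`. -/
def cauchyVecMulVec (w : ℕ → I → R) (ξ : ℕ → J → R) (k : ℕ) : Matrix I J R :=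
  ∑ l ∈ Icc 1 k, vecMulVec (w l) (ξ (k + 1 - l))

theorem IsLeftJordanChain.vecMul_update_zero {M : Matrix I I R} {μ : R} {w : ℕ → I → R} {α : ℕ}
    (hw : IsLeftJordanChain M μ w α) {l : ℕ} (hl : l ∈ Icc 1 α) :
    update w 0 0 l ᵥ* M = μ • update w 0 0 l + update w 0 0 (l - 1) := by
  obtain ⟨hl₁, hlα⟩ := mem_Icc.mp hl
  obtain rfl | hl₂ : l = 1 ∨ 2 ≤ l := by omega
  · simpa using hw.1
  · rw [update_of_ne (by omega), update_of_ne (by omega)]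
    exact hw.2 l hl₂ hlα

theorem IsGenLeftJordanChain.vecMul_update_zero {E B : Matrix J J R} {θ : R} {ξ : ℕ → J → R}
    {γ : ℕ} (hξ : IsGenLeftJordanChain E B θ ξ γ) {j : ℕ} (hj : j ∈ Icc 1 γ) :
    update ξ 0 0 j ᵥ* E + update ξ 0 0 (j - 1) ᵥ* B = θ • update ξ 0 0 j := by
  obtain ⟨hj₁, hjγ⟩ := mem_Icc.mp hj
  obtain rfl | hj₂ : j = 1 ∨ 2 ≤ j := by omega
  · simpa using hξ.1
  · rw [update_of_ne (by omega), update_of_ne (by omega)]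
    exact hξ.2 j hj₂ hjγ

theorem cauchyVecMulVec_mul_add_of_zero {M : Matrix I I R} {E B : Matrix J J R}
    {μ θ : R} {w : ℕ → I → R} {ξ : ℕ → J → R} {k : ℕ} (hw₀ : w 0 = 0) (hξ₀ : ξ 0 = 0)
    (hw : ∀ l ∈ Icc 1 k, w l ᵥ* M = μ • w l + w (l - 1))
    (hξ : ∀ j ∈ Icc 1 k, ξ j ᵥ* (E + μ • B) + ξ (j - 1) ᵥ* B = θ • ξ j) :
    cauchyVecMulVec w ξ k * E + Mᵀ * cauchyVecMulVec w ξ k * B = θ • cauchyVecMulVec w ξ k := by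
  -- the cross terms `w(l-1)ᵀ ξ(k+1-l) B` left over from the two chain relations telescope
  let f (l : ℕ) : Matrix I J R := vecMulVec (w (l - 1)) (ξ (k + 1 - l) ᵥ* B)
  have hterm : ∀ l ∈ Icc 1 k,
      vecMulVec (w l) (ξ (k + 1 - l)) * E + Mᵀ * vecMulVec (w l) (ξ (k + 1 - l)) * B
        = θ • vecMulVec (w l) (ξ (k + 1 - l)) + (f l - f (l + 1)) := by
    intro l hl
    obtain ⟨hl₁, hlk⟩ := mem_Icc.mp hl
    have hξE := hξ (k + 1 - l) (mem_Icc.mpr ⟨by omega, by omega⟩)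
    rw [vecMul_add, vecMul_smul, add_right_comm, ← eq_sub_iff_add_eq, ← eq_sub_iff_add_eq,
      show k + 1 - l - 1 = k - l by omega] at hξE
    simp only [f, vecMulVec_mul, mul_vecMulVec, mulVec_transpose, hw l hl, hξE,
      Nat.add_sub_cancel, show k + 1 - (l + 1) = k - l by omega]
    ext i j
    simp only [Matrix.add_apply, Matrix.sub_apply, Matrix.smul_apply, vecMulVec_apply,
      Pi.add_apply, Pi.sub_apply, Pi.smul_apply, smul_eq_mul]
    ring
  have htelescope : ∑ l ∈ Icc 1 k, (f l - f (l + 1)) = 0 := by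
    rw [← Ico_add_one_right_eq_Icc, ← neg_eq_zero, ← sum_neg_distrib]
    simp only [neg_sub]
    rw [sum_Ico_sub f (by omega)]
    ext
    simp [f, hw₀, hξ₀, vecMulVec_apply]
  simp only [cauchyVecMulVec, Matrix.sum_mul, Matrix.mul_sum, smul_sum]
  rw [← sum_add_distrib, sum_congr rfl hterm, sum_add_distrib, htelescope, add_zero]

theorem IsLeftJordanChain.cauchyVecMulVec_mul_add {M : Matrix I I R}
    {E B : Matrix J J R} {μ θ : R} {w : ℕ → I → R} {ξ : ℕ → J → R} {α γ k : ℕ}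
    (hw : IsLeftJordanChain M μ w α) (hξ : IsGenLeftJordanChain (E + μ • B) B θ ξ γ)
    (hkα : k ≤ α) (hkγ : k ≤ γ) :
    cauchyVecMulVec w ξ k * E + Mᵀ * cauchyVecMulVec w ξ k * B = θ • cauchyVecMulVec w ξ k := by
  have hupdate : cauchyVecMulVec w ξ k = cauchyVecMulVec (update w 0 0) (update ξ 0 0) k :=
    sum_congr rfl fun l hl => by
      obtain ⟨hl₁, hlk⟩ := mem_Icc.mp hl
      rw [update_of_ne (by omega), update_of_ne (by omega)]
  rw [hupdate]
  exact cauchyVecMulVec_mul_add_of_zero (by simp) (by simp)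
    (fun l hl => hw.vecMul_update_zero (Icc_subset_Icc_right hkα hl))
    (fun j hj => hξ.vecMul_update_zero (Icc_subset_Icc_right hkγ hj))

theorem elim_vecMul_fromBlocks_zero [DecidableEq I] {W₁ : Matrix I I R} {W₂ : Matrix J J R}
    {D : Matrix J I R} {μ : R} (hW₁ : IsUnit (W₁ - μ • 1).det) {a a' : I → R} {b b' : J → R}
    (ha : a = (a' - b ᵥ* D) ᵥ* (W₁ - μ • 1)⁻¹) (hb : b ᵥ* W₂ = μ • b + b') :
    Sum.elim a b ᵥ* fromBlocks W₁ 0 D W₂ = μ • Sum.elim a b + Sum.elim a' b' := by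
  have ha' : a ᵥ* W₁ + b ᵥ* D = μ • a + a' := by
    have : a ᵥ* (W₁ - μ • 1) = a' - b ᵥ* D := by
      rw [ha, vecMul_vecMul, nonsing_inv_mul _ hW₁, vecMul_one]
    rw [vecMul_sub, vecMul_smul, vecMul_one] at this
    linear_combination (norm := module) this
  ext (i | j) <;> simp [vecMul_fromBlocks, ha', hb]

theorem IsLeftJordanChain.fromBlocks [DecidableEq I] {W₁ : Matrix I I R} {W₂ : Matrix J J R}
    {D : Matrix J I R} {μ : R} (hW₁ : IsUnit (W₁ - μ • 1).det) {α : ℕ} {v : ℕ → J → R}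
    {v₂₁ : ℕ → I → R} (hv : IsLeftJordanChain W₂ μ v α)
    (hv₂₁ : v₂₁ 1 = -((v 1 ᵥ* D) ᵥ* (W₁ - μ • 1)⁻¹))
    (hv₂₁k : ∀ k, 2 ≤ k → k ≤ α → v₂₁ k = (v₂₁ (k - 1) - v k ᵥ* D) ᵥ* (W₁ - μ • 1)⁻¹) :
    IsLeftJordanChain (fromBlocks W₁ 0 D W₂) μ (fun k => Sum.elim (v₂₁ k) (v k)) α := by
  refine ⟨?_, fun k hk₂ hkα => elim_vecMul_fromBlocks_zero hW₁ (hv₂₁k k hk₂ hkα) (hv.2 k hk₂ hkα)⟩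
  simpa using elim_vecMul_fromBlocks_zero (a' := 0) (b' := 0) hW₁ (by simpa [neg_vecMul] using hv₂₁)
    (by simpa using hv.1)

end JordanChains

theorem vec_transpose_vecMul_one_kronecker_add {R : Type*} [CommRing R] {I J : Type*}
    [Fintype I] [Fintype J] [DecidableEq I] (X : Matrix I J R) (M : Matrix I I R)
    (E B : Matrix J J R) :
    vec Xᵀ ᵥ* (1 ⊗ₖ E + M ⊗ₖ B) = vec (X * E + Mᵀ * X * B)ᵀ := by
  rw [vecMul_add, vec_vecMul_kronecker, vec_vecMul_kronecker, ← vec_add, transpose_add,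
    transpose_mul, transpose_mul, transpose_mul, transpose_transpose, Matrix.mul_one,
    Matrix.mul_assoc]

theorem cmap_one_kronecker_add_kronecker {I J : Type*} [DecidableEq I] (M : Matrix I I ℝ)
    (E B : Matrix J J ℝ) : cmap (1 ⊗ₖ E + M ⊗ₖ B) = 1 ⊗ₖ cmap E + cmap M ⊗ₖ cmap B := by
  ext ⟨i, j⟩ ⟨i', j'⟩
  simp [cmap, kroneckerMap_apply, one_apply, apply_ite]

theorem cmap_zero {I J : Type*} : cmap (0 : Matrix I J ℝ) = 0 :=
  Matrix.map_zero _ Complex.ofReal_zero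

theorem cmap_fromBlocks {I J K L : Type*} (A : Matrix I K ℝ) (B : Matrix I L ℝ)
    (C : Matrix J K ℝ) (D : Matrix J L ℝ) :
    cmap (fromBlocks A B C D) = fromBlocks (cmap A) (cmap B) (cmap C) (cmap D) :=
  fromBlocks_map A B C D _

theorem isUnit_det_sub_smul_one_of_not_isEig {I : Type*} [Fintype I] [DecidableEq I]
    {M : Matrix I I ℂ} {μ : ℂ} (hμ : ¬ IsEig M μ) : IsUnit (M - μ • 1).det := by
  rw [isUnit_iff_ne_zero, Ne, ← exists_mulVec_eq_zero_iff]
  rintro ⟨x, hx, hMx⟩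
  rw [sub_mulVec, smul_mulVec, one_mulVec, sub_eq_zero] at hMx
  exact hμ ⟨x, hx, hMx⟩

theorem homogeneous_twoLayer_left_eigenvectors_general
    (N n m : ℕ)
    (A : Matrix (Fin n) (Fin n) ℝ) (H : Matrix (Fin n) (Fin m) ℝ)
    (C : Matrix (Fin m) (Fin n) ℝ) (h : ℝ)
    (W1 W2 D21 : Matrix (Fin N) (Fin N) ℝ)
    (μ θ : ℂ)
    (hμ1 : ¬ IsEig (cmap W1) μ)
    (α γ : ℕ) (v v21 : ℕ → Fin N → ℂ) (ξ : ℕ → Fin n → ℂ)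
    -- left Jordan chain of W² at μ
    (hv1 : v 1 ᵥ* cmap W2 = μ • v 1)
    (hvk : ∀ k, 2 ≤ k → k ≤ α → v k ᵥ* cmap W2 = μ • v k + v (k - 1))
    -- the coupled vectors v^{2,1}(k)
    (hv211 : v21 1 = -((v 1 ᵥ* cmap D21)
        ᵥ* (cmap W1 - μ • (1 : Matrix (Fin N) (Fin N) ℂ))⁻¹))
    (hv21k : ∀ k, 2 ≤ k → k ≤ α →
      v21 k = (v21 (k - 1) - v k ᵥ* cmap D21)
        ᵥ* (cmap W1 - μ • (1 : Matrix (Fin N) (Fin N) ℂ))⁻¹)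
    -- generalized left Jordan chain of E = e^{Ah} + μ·𝓗(h) about 𝓗(h) at θ
    (hξ1 : ξ 1 ᵥ* (cmap (matExp (h • A)) + μ • cmap (intExp A h * H * C)) = θ • ξ 1)
    (hξk : ∀ k, 2 ≤ k → k ≤ γ →
      ξ k ᵥ* (cmap (matExp (h • A)) + μ • cmap (intExp A h * H * C))
        + ξ (k - 1) ᵥ* cmap (intExp A h * H * C) = θ • ξ k)
    (η : ℕ → (Fin N ⊕ Fin N) × Fin n → ℂ)
    (hη : ∀ k, η k = fun q =>
      ∑ l ∈ Finset.Icc 1 k, Sum.elim (v21 l) (v l) q.1 * ξ (k + 1 - l) q.2) :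
    ∀ k, 1 ≤ k → k ≤ min α γ →
      η k ᵥ* cmap ((1 : Matrix (Fin N ⊕ Fin N) (Fin N ⊕ Fin N) ℝ) ⊗ₖ matExp (h • A)
          + (Matrix.fromBlocks W1 0 D21 W2) ⊗ₖ (intExp A h * H * C)) = θ • η k := by
  intro k _ hk
  have hW : IsLeftJordanChain (fromBlocks (cmap W1) 0 (cmap D21) (cmap W2)) μ
      (fun l => Sum.elim (v21 l) (v l)) α :=
    IsLeftJordanChain.fromBlocks (isUnit_det_sub_smul_one_of_not_isEig hμ1) ⟨hv1, hvk⟩ hv211 hv21k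
  have hηk : η k = vec (cauchyVecMulVec (fun l => Sum.elim (v21 l) (v l)) ξ k)ᵀ := by
    ext q
    simp [hη k, cauchyVecMulVec, vecMulVec_apply, Matrix.sum_apply]
  rw [hηk, cmap_one_kronecker_add_kronecker, cmap_fromBlocks, cmap_zero,
    vec_transpose_vecMul_one_kronecker_add,
    hW.cauchyVecMulVec_mul_add ⟨hξ1, hξk⟩ (le_min_iff.mp hk).1 (le_min_iff.mp hk).2,
    transpose_smul, vec_smul]

/-- left generalized eigenvectors of the homogeneous two-layer
drive-response sampled system `Φ_s = I_{2N} ⊗ e^{Ah} + W̄ ⊗ 𝓗(h)`. -/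
theorem homogeneous_twoLayer_left_eigenvectors
    (N n m : ℕ)
    (A : Matrix (Fin n) (Fin n) ℝ) (H : Matrix (Fin n) (Fin m) ℝ)
    (C : Matrix (Fin m) (Fin n) ℝ) (h : ℝ) (hh : 0 < h)
    (W1 W2 D21 : Matrix (Fin N) (Fin N) ℝ)
    (μ θ : ℂ)
    (hμ2 : IsEig (cmap W2) μ) (hμ1 : ¬ IsEig (cmap W1) μ)
    (α γ : ℕ) (v v21 : ℕ → Fin N → ℂ) (ξ : ℕ → Fin n → ℂ)
    -- left Jordan chain of W² at μ
    (hv1 : v 1 ᵥ* cmap W2 = μ • v 1)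
    (hvk : ∀ k, 2 ≤ k → k ≤ α → v k ᵥ* cmap W2 = μ • v k + v (k - 1))
    -- the coupled vectors v^{2,1}(k)
    (hv211 : v21 1 = -((v 1 ᵥ* cmap D21)
        ᵥ* (cmap W1 - μ • (1 : Matrix (Fin N) (Fin N) ℂ))⁻¹))
    (hv21k : ∀ k, 2 ≤ k → k ≤ α →
      v21 k = (v21 (k - 1) - v k ᵥ* cmap D21)
        ᵥ* (cmap W1 - μ • (1 : Matrix (Fin N) (Fin N) ℂ))⁻¹)
    -- generalized left Jordan chain of E = e^{Ah} + μ·𝓗(h) about 𝓗(h) at θ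
    (hξ1 : ξ 1 ᵥ* (cmap (matExp (h • A)) + μ • cmap (intExp A h * H * C)) = θ • ξ 1)
    (hξk : ∀ k, 2 ≤ k → k ≤ γ →
      ξ k ᵥ* (cmap (matExp (h • A)) + μ • cmap (intExp A h * H * C))
        + ξ (k - 1) ᵥ* cmap (intExp A h * H * C) = θ • ξ k)
    (η : ℕ → (Fin N ⊕ Fin N) × Fin n → ℂ)
    (hη : ∀ k, η k = fun q =>
      ∑ l ∈ Finset.Icc 1 k, Sum.elim (v21 l) (v l) q.1 * ξ (k + 1 - l) q.2) :
    ∀ k, 1 ≤ k → k ≤ min α γ →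
      η k ᵥ* cmap ((1 : Matrix (Fin N ⊕ Fin N) (Fin N ⊕ Fin N) ℝ) ⊗ₖ matExp (h • A)
          + (Matrix.fromBlocks W1 0 D21 W2) ⊗ₖ (intExp A h * H * C)) = θ • η k :=
  homogeneous_twoLayer_left_eigenvectors_general N n m A H C h W1 W2 D21 μ θ hμ1 α γ v v21 ξ hv1 hvk
    hv211 hv21k hξ1 hξk η hη
end

section
/- Consider the M-layer networked sampled-data system with star inter-layer structure: the state matrix Φ_s ∈ ℝ^{MNn×MNn} has diagonal blocks Φ^{K,K} = I_N ⊗ e^{A^K h} + W^K ⊗ 𝓗^K(h), first-column blocks Φ^{K,1} = D^{K,1} ⊗ 𝓟^{K,1}(h) for K = 2, …, M, and zeros elsewhere, and the input matrix is Ψ_s = diag(Ψ^{1,1}, …, Ψ^{M,M}) with Ψ^{K,K} = Δ^K ⊗ 𝓑^K(h). Suppose that for every θ ∈ ℂ and every tuple ξ_1, …, ξ_M ∈ ℂ^{1×Nn}, not all zero, satisfying ξ_K(θ I_{Nn} − Φ^{K,K}) = 0 for all K = 2, …, M and ξ_1(θ I_{Nn} − Φ^{1,1}) = Σ_{K=2}^{M}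 ξ_K Φ^{K,1}, the concatenated row vector [ξ_1 Ψ^{1,1}, …, ξ_M Ψ^{M,M}] is nonzero. Then the discrete-time system x(k+1) = Φ_s x(k) + Ψ_s u(k) is controllable. -/
/-!
By the Hautus (PBH) test, `(Φs, Ψs)` is controllable once no nonzero left eigenvector `η` of `Φs`
satisfies `η Ψs = 0`. Cut such an `η` into its layer blocks `ξ_j`: the star shape of `Φs` turns
`η Φs = θ η` into exactly the equations of the hypothesis, and the block-diagonal `Ψs` turns
`η Ψs = 0` into `ξ_j Ψ^{j,j} = 0` for every `j`, which the hypothesis forbids.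

The Hautus test itself: the row vectors annihilating every `F ^ k * G` form an `F`-invariant
subspace; over `ℂ` a nonzero one would contain a left eigenvector of `F` killed by `G`. So the
columns of all `F ^ k * G` span the state space, and since the spaces reachable from `0` grow with
the horizon and stabilise, a single horizon reaches every state.
-/

open Matrix
open scoped Kronecker

theorem cmap_eq_map_ofRealHom {a b : Type*} (A : Matrix a b ℝ) :
    cmap A = A.map Complex.ofRealHom :=
  rfl

theorem cmap_mul {a b c : Type*} [Fintype b] (A : Matrix a b ℝ) (B : Matrix b c ℝ) :
    cmap (A * B) = cmap A * cmap B :=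
  Matrix.map_mul (f := Complex.ofRealHom)

theorem cmap_pow {a : Type*} [Fintype a] [DecidableEq a] (A : Matrix a a ℝ) (k : ℕ) :
    cmap (A ^ k) = cmap A ^ k :=
  map_pow Complex.ofRealHom.mapMatrix A k

namespace Matrix

section Hautus

variable {K q r : Type*} [Field K] [Fintype q]

def HautusCondition (F : Matrix q q K) (G : Matrix q r K) : Prop :=
  ∀ (θ : K) (η : q → K), η ≠ 0 → η ᵥ* F = θ • η → η ᵥ* G ≠ 0

variable [DecidableEq q]

theorem HautusCondition.eq_zero_of_forall_vecMul_pow_mul_eq_zero [IsAlgClosed K]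
    {F : Matrix q q K} {G : Matrix q r K} (hFG : HautusCondition F G)
    {ζ : q → K} (hζ : ∀ k : ℕ, ζ ᵥ* (F ^ k * G) = 0) : ζ = 0 := by
  let V : Submodule K (q → K) := ⨅ k : ℕ, LinearMap.ker (F ^ k * G).vecMulLinear
  have mem_V (η : q → K) : η ∈ V ↔ ∀ k : ℕ, η ᵥ* (F ^ k * G) = 0 := by
    simp [V, Submodule.mem_iInf]
  have hV : ∀ η ∈ V, F.vecMulLinear η ∈ V := by
    intro η hη
    rw [mem_V] at hη ⊢
    intro k
    rw [vecMulLinear_apply, vecMul_vecMul, ← Matrix.mul_assoc, ← pow_succ']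
    exact hη (k + 1)
  by_contra hζ0
  have : Nontrivial V := ⟨⟨⟨ζ, (mem_V ζ).2 hζ⟩, 0, fun h => hζ0 congr(($h).1)⟩⟩
  obtain ⟨θ, hθ⟩ := Module.End.exists_eigenvalue (F.vecMulLinear.restrict hV)
  obtain ⟨⟨η, hηV⟩, hη⟩ := hθ.exists_hasEigenvector
  refine hFG θ η (fun h => hη.2 (Subtype.ext h)) congr(($(hη.apply_eq_smul)).1) ?_
  simpa using (mem_V η).1 hηV 0

theorem HautusCondition.eq_zero_of_forall_vecMul_pow_mul_eq_zero_real {F : Matrix q q ℝ}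
    {G : Matrix q r ℝ} (hFG : HautusCondition (cmap F) (cmap G))
    {ζ : q → ℝ} (hζ : ∀ k : ℕ, ζ ᵥ* (F ^ k * G) = 0) : ζ = 0 := by
  have hζc : Complex.ofRealHom ∘ ζ = 0 := by
    refine hFG.eq_zero_of_forall_vecMul_pow_mul_eq_zero fun k => funext fun j => ?_
    rw [← cmap_pow, ← cmap_mul, cmap_eq_map_ofRealHom, ← RingHom.map_vecMul, hζ k]
    simp
  simpa [funext_iff] using hζc

end Hautus

section Reachability

variable {q r : Type*} [Fintype q] [Fintype r] (F : Matrix q q ℝ) (G : Matrix q r ℝ)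

-- The state at time `k`, bundled as a linear map in `(x₀, u)` so that the states reachable
-- from `0` form a submodule for free.
def stateMap : ℕ → ((q → ℝ) × (ℕ → r → ℝ)) →ₗ[ℝ] (q → ℝ)
  | 0 => LinearMap.fst ℝ _ _
  | k + 1 => F.mulVecLin ∘ₗ stateMap k + G.mulVecLin ∘ₗ LinearMap.proj k ∘ₗ LinearMap.snd ℝ _ _

@[simp]
theorem stateMap_zero (xu : (q → ℝ) × (ℕ → r → ℝ)) : stateMap F G 0 xu = xu.1 := rfl

@[simp]
theorem stateMap_succ (k : ℕ) (xu : (q → ℝ) × (ℕ → r → ℝ)) :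
    stateMap F G (k + 1) xu = F *ᵥ stateMap F G k xu + G *ᵥ xu.2 k := rfl

theorem stateMap_succ' (k : ℕ) (x : q → ℝ) (u : ℕ → r → ℝ) :
    stateMap F G (k + 1) (x, u) = stateMap F G k (F *ᵥ x + G *ᵥ u 0, fun j => u (j + 1)) := by
  induction k with
  | zero => simp
  | succ k ih => rw [stateMap_succ, ih, stateMap_succ]

theorem stateMap_zero_input [DecidableEq q] (k : ℕ) (x : q → ℝ) :
    stateMap F G k (x, 0) = (F ^ k) *ᵥ x := by
  induction k with
  | zero => simp
  | succ k ih => simp [ih, pow_succ', mulVec_mulVec]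

def reachable (T : ℕ) : Submodule ℝ (q → ℝ) :=
  LinearMap.range (stateMap F G T ∘ₗ LinearMap.inr ℝ _ _)

theorem reachable_mono : Monotone (reachable F G) := by
  refine monotone_nat_of_le_succ fun T y ⟨u, hu⟩ => ⟨Nat.rec 0 fun j _ => u j, ?_⟩
  rw [LinearMap.comp_apply, LinearMap.inr_apply, stateMap_succ']
  simpa using hu

theorem mulVec_pow_mul_mem_reachable [DecidableEq q] (k : ℕ) (v : r → ℝ) :
    (F ^ k * G) *ᵥ v ∈ reachable F G (k + 1) := by
  refine ⟨fun j => if j = 0 then v else 0, ?_⟩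
  rw [LinearMap.comp_apply, LinearMap.inr_apply, stateMap_succ', ← mulVec_mulVec,
    ← stateMap_zero_input F G k]
  congr 2
  simp

variable {F G} [DecidableEq q]

theorem HautusCondition.exists_reachable_eq_top (hFG : HautusCondition (cmap F) (cmap G)) :
    ∃ T, reachable F G T = ⊤ := by
  classical
  obtain ⟨T, hT⟩ := WellFoundedGT.monotone_chain_condition ⟨_, reachable_mono F G⟩
  have le_T (k : ℕ) : reachable F G k ≤ reachable F G T :=
    (reachable_mono F G (le_max_left k T)).trans (hT _ (le_max_right k T)).ge
  refine ⟨T, by_contra fun hne => ?_⟩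
  obtain ⟨f, hf, hfT⟩ :=
    Submodule.exists_dual_map_eq_bot_of_lt_top (lt_top_iff_ne_top.2 hne) inferInstance
  suffices (dotProductEquiv ℝ q).symm f = 0 from hf (by simpa using this)
  refine hFG.eq_zero_of_forall_vecMul_pow_mul_eq_zero_real fun k => funext fun j => ?_
  have hmem := le_T (k + 1) (mulVec_pow_mul_mem_reachable F G k (Pi.single j 1))
  have hf_col : f ((F ^ k * G) *ᵥ Pi.single j 1) = 0 := by
    simpa [hfT] using Submodule.mem_map_of_mem (f := f) hmem
  rw [← dotProduct_single_one (_ ᵥ* _), ← dotProduct_mulVec, ← dotProductEquiv_apply_apply,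
    LinearEquiv.apply_symm_apply, hf_col, Pi.zero_apply]

theorem HautusCondition.controllable (hFG : HautusCondition (cmap F) (cmap G)) :
    Controllable F G := by
  intro x₀ xf
  obtain ⟨T, hT⟩ := hFG.exists_reachable_eq_top
  obtain ⟨u, hu⟩ : xf - (F ^ T) *ᵥ x₀ ∈ reachable F G T := hT ▸ Submodule.mem_top
  refine ⟨T, u, fun k => stateMap F G k (x₀, u), rfl, fun k => rfl, ?_⟩
  show stateMap F G T (x₀, u) = xf
  have hsplit : ((x₀, u) : (q → ℝ) × (ℕ → r → ℝ)) = (x₀, 0) + (0, u) := by simp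
  simp only [LinearMap.comp_apply, LinearMap.inr_apply] at hu
  rw [hsplit, map_add, stateMap_zero_input, hu, add_sub_cancel]

end Reachability

section RowBlock

variable {R ι κ : Type*} {M : ℕ}

/-- The layer block `ξ_j` of a row vector `η`; it is `0` for `j ≥ M`. -/
def rowBlock [Zero R] (η : Fin M × ι → R) (j : ℕ) : ι → R :=
  fun y => if h : j < M then η (⟨j, h⟩, y) else 0

@[simp]
theorem rowBlock_fin [Zero R] (η : Fin M × ι → R) (i : Fin M) :
    rowBlock η i = fun y => η (i, y) := by
  funext y
  simp [rowBlock]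

@[simp]
theorem rowBlock_zero [Zero R] (j : ℕ) : rowBlock (0 : Fin M × ι → R) j = 0 := by
  ext; simp [rowBlock]

theorem rowBlock_smul [MulZeroClass R] (c : R) (η : Fin M × ι → R) (j : ℕ) :
    rowBlock (c • η) j = c • rowBlock η j := by
  funext y
  unfold rowBlock
  split_ifs <;> simp

theorem exists_rowBlock_ne_zero [Zero R] {η : Fin M × ι → R} (hη : η ≠ 0) :
    ∃ j < M, rowBlock η j ≠ 0 := by
  obtain ⟨⟨i, y⟩, hiy⟩ := Function.ne_iff.1 hη
  exact ⟨i, i.isLt, by simpa [funext_iff] using ⟨y, hiy⟩⟩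

theorem rowBlock_vecMul [NonUnitalNonAssocSemiring R] [Fintype ι] (η : Fin M × ι → R)
    (X : Matrix (Fin M × ι) (Fin M × κ) R) (b : ℕ → ℕ → Matrix ι κ R)
    (hX : ∀ (i K : Fin M) y x, X (i, y) (K, x) = b i K y x) {K : ℕ} (hK : K < M) :
    rowBlock (η ᵥ* X) K = ∑ i ∈ Finset.range M, rowBlock η i ᵥ* b i K := by
  ext x
  rw [Finset.sum_apply, ← Fin.sum_univ_eq_sum_range (fun i => (rowBlock η i ᵥ* b i K) x)]
  simp [rowBlock, hK, vecMul, dotProduct, Fintype.sum_prod_type, hX]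

end RowBlock

section StarStructure

variable {R ι κ : Type*} {M : ℕ}

def starBlockMatrix [Zero R] (M : ℕ) (Φd Φcol : ℕ → Matrix ι ι R) :
    Matrix (Fin M × ι) (Fin M × ι) R :=
  of fun q r => if (q.1 : ℕ) = r.1 then Φd q.1 q.2 r.2
    else if (r.1 : ℕ) = 0 then Φcol q.1 q.2 r.2 else 0

def diagBlockMatrix [Zero R] (M : ℕ) (Ψd : ℕ → Matrix ι κ R) :
    Matrix (Fin M × ι) (Fin M × κ) R :=
  of fun q r => if (q.1 : ℕ) = r.1 then Ψd q.1 q.2 r.2 else 0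

theorem cmap_starBlockMatrix (Φd Φcol : ℕ → Matrix ι ι ℝ) :
    cmap (starBlockMatrix M Φd Φcol) =
      starBlockMatrix M (fun i => cmap (Φd i)) (fun i => cmap (Φcol i)) := by
  ext
  simp only [cmap, starBlockMatrix, map_apply, of_apply]
  split_ifs <;> simp

theorem cmap_diagBlockMatrix (Ψd : ℕ → Matrix ι κ ℝ) :
    cmap (diagBlockMatrix M Ψd) = diagBlockMatrix M fun i => cmap (Ψd i) := by
  ext
  simp only [cmap, diagBlockMatrix, map_apply, of_apply]
  split_ifs <;> simp

variable [NonUnitalNonAssocSemiring R] [Fintype ι] (η : Fin M × ι → R)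

theorem rowBlock_vecMul_starBlockMatrix (Φd Φcol : ℕ → Matrix ι ι R) {K : ℕ} (hK : K < M) :
    rowBlock (η ᵥ* starBlockMatrix M Φd Φcol) K = ∑ i ∈ Finset.range M,
      rowBlock η i ᵥ* if i = K then Φd i else if K = 0 then Φcol i else 0 := by
  refine rowBlock_vecMul η _ (fun i K => if i = K then Φd i else if K = 0 then Φcol i else 0)
    (fun i K y x => ?_) hK
  simp only [starBlockMatrix, of_apply]
  split_ifs <;> rfl

theorem rowBlock_vecMul_starBlockMatrix_of_ne_zero (Φd Φcol : ℕ → Matrix ι ι R) {K : ℕ}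
    (hK0 : K ≠ 0) (hK : K < M) :
    rowBlock (η ᵥ* starBlockMatrix M Φd Φcol) K = rowBlock η K ᵥ* Φd K := by
  rw [rowBlock_vecMul_starBlockMatrix η Φd Φcol hK,
    Finset.sum_eq_single_of_mem K (Finset.mem_range.2 hK) fun i _ hiK => by simp [hiK, hK0],
    if_pos rfl]

theorem rowBlock_vecMul_starBlockMatrix_zero (Φd Φcol : ℕ → Matrix ι ι R) (hM : 0 < M) :
    rowBlock (η ᵥ* starBlockMatrix M Φd Φcol) 0 =
      rowBlock η 0 ᵥ* Φd 0 + ∑ K ∈ Finset.Ico 1 M, rowBlock η K ᵥ* Φcol K := by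
  rw [rowBlock_vecMul_starBlockMatrix η Φd Φcol hM, Finset.range_eq_Ico,
    Finset.sum_eq_sum_Ico_succ_bot hM, if_pos rfl]
  congr 1
  refine Finset.sum_congr rfl fun i hi => ?_
  rw [if_neg (Nat.one_le_iff_ne_zero.1 (Finset.mem_Ico.1 hi).1), if_pos rfl]

theorem rowBlock_vecMul_diagBlockMatrix (Ψd : ℕ → Matrix ι κ R) {K : ℕ} (hK : K < M) :
    rowBlock (η ᵥ* diagBlockMatrix M Ψd) K = rowBlock η K ᵥ* Ψd K := by
  rw [rowBlock_vecMul η _ (fun i K => if i = K then Ψd i else 0) (fun i K y x => ?_) hK,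
    Finset.sum_eq_single_of_mem K (Finset.mem_range.2 hK) fun i _ hiK => by simp [hiK],
    if_pos rfl]
  simp only [diagBlockMatrix, of_apply]
  split_ifs <;> rfl

end StarStructure

end Matrix

/-- Layers are 0-indexed: layer `j` here is layer `j+1` of the paper, and layer `0` is the centre
of the star. -/
theorem starStructure_controllable_general
    (M N n p : ℕ) (hM : 2 ≤ M)
    (Φd Φcol : ℕ → Matrix (Fin N × Fin n) (Fin N × Fin n) ℝ)
    (Ψd : ℕ → Matrix (Fin N × Fin n) (Fin N × Fin p) ℝ)
    (Φs : Matrix (Fin M × (Fin N × Fin n)) (Fin M × (Fin N × Fin n)) ℝ)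
    (Ψs : Matrix (Fin M × (Fin N × Fin n)) (Fin M × (Fin N × Fin p)) ℝ)
    (hΦs : Φs = Matrix.of fun q r =>
      if (q.1 : ℕ) = (r.1 : ℕ) then Φd (q.1 : ℕ) q.2 r.2
      else if (r.1 : ℕ) = 0 then Φcol (q.1 : ℕ) q.2 r.2 else 0)
    (hΨs : Ψs = Matrix.of fun q r =>
      if (q.1 : ℕ) = (r.1 : ℕ) then Ψd (q.1 : ℕ) q.2 r.2 else 0)
    -- for every not-all-zero inter-layer coupling group,
    -- the concatenation [ξ_1 Ψ^{1,1}, …, ξ_M Ψ^{M,M}] is nonzero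
    (hyp : ∀ (θ : ℂ) (ξ : ℕ → Fin N × Fin n → ℂ),
      (∃ j < M, ξ j ≠ 0) →
      (∀ K, 1 ≤ K → K < M →
        ξ K ᵥ* (θ • (1 : Matrix (Fin N × Fin n) (Fin N × Fin n) ℂ)
            - cmap (Φd K)) = 0) →
      ξ 0 ᵥ* (θ • (1 : Matrix (Fin N × Fin n) (Fin N × Fin n) ℂ)
            - cmap (Φd 0))
          = ∑ K ∈ Finset.Ico 1 M, ξ K ᵥ* cmap (Φcol K) →
      ∃ j < M, ξ j ᵥ* cmap (Ψd j) ≠ 0) :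
    Controllable Φs Ψs := by
  have hΦs' : cmap Φs = starBlockMatrix M (fun i => cmap (Φd i)) (fun i => cmap (Φcol i)) :=
    hΦs ▸ cmap_starBlockMatrix Φd Φcol
  have hΨs' : cmap Ψs = diagBlockMatrix M fun i => cmap (Ψd i) :=
    hΨs ▸ cmap_diagBlockMatrix Ψd
  refine HautusCondition.controllable fun θ η hη heig hΨ => ?_
  rw [hΦs'] at heig
  rw [hΨs'] at hΨ
  have heig_block (K : ℕ) := congrArg (rowBlock · K) heig
  obtain ⟨j, hj, hne⟩ := hyp θ (rowBlock η) (exists_rowBlock_ne_zero hη)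
    (fun K hK1 hKM => by
      rw [vecMul_sub, vecMul_smul, vecMul_one, ← rowBlock_smul, ← heig_block K,
        rowBlock_vecMul_starBlockMatrix_of_ne_zero η _ _ (by omega) hKM, sub_self])
    (by
      rw [vecMul_sub, vecMul_smul, vecMul_one, ← rowBlock_smul, ← heig_block 0,
        rowBlock_vecMul_starBlockMatrix_zero η _ _ (by omega), add_sub_cancel_left])
  exact hne (by rw [← rowBlock_vecMul_diagBlockMatrix η (fun i => cmap (Ψd i)) hj, hΨ,
    rowBlock_zero])

/-- sufficient controllability condition for the deep networked
sampled-data system with star inter-layer structure (Theorem 6 in the paper).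
Layers are 0-indexed: layer `j` here is layer `j+1` of the paper; for `j ≥ 1`,
`D j` and `P j` describe the inter-layer block from the central layer 0 into layer `j`. -/
theorem starStructure_controllable
    (M N n m p : ℕ) (hM : 2 ≤ M) (hN : 2 ≤ N)
    (A : ℕ → Matrix (Fin n) (Fin n) ℝ) (B : ℕ → Matrix (Fin n) (Fin p) ℝ)
    (C : ℕ → Matrix (Fin m) (Fin n) ℝ) (H : ℕ → Matrix (Fin n) (Fin m) ℝ)
    (P : ℕ → Matrix (Fin n) (Fin m) ℝ)
    (W : ℕ → Matrix (Fin N) (Fin N) ℝ) (D : ℕ → Matrix (Fin N) (Fin N) ℝ)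
    (Δ : ℕ → Matrix (Fin N) (Fin N) ℝ)
    (hΔd : ∀ j, (Δ j).IsDiag) (hΔ01 : ∀ j i, Δ j i i = 0 ∨ Δ j i i = 1)
    (h : ℝ) (hh : 0 < h)
    (Φd Φcol : ℕ → Matrix (Fin N × Fin n) (Fin N × Fin n) ℝ)
    (Ψd : ℕ → Matrix (Fin N × Fin n) (Fin N × Fin p) ℝ)
    (hΦd : ∀ j, Φd j = (1 : Matrix (Fin N) (Fin N) ℝ) ⊗ₖ matExp (h • A j)
        + W j ⊗ₖ (intExp (A j) h * H j * C j))
    (hΦcol : ∀ j, Φcol j = D j ⊗ₖ (intExp (A j) h * P j * C 0))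
    (hΨd : ∀ j, Ψd j = Δ j ⊗ₖ (intExp (A j) h * B j))
    (Φs : Matrix (Fin M × (Fin N × Fin n)) (Fin M × (Fin N × Fin n)) ℝ)
    (Ψs : Matrix (Fin M × (Fin N × Fin n)) (Fin M × (Fin N × Fin p)) ℝ)
    (hΦs : Φs = Matrix.of fun q r =>
      if (q.1 : ℕ) = (r.1 : ℕ) then Φd (q.1 : ℕ) q.2 r.2
      else if (r.1 : ℕ) = 0 then Φcol (q.1 : ℕ) q.2 r.2 else 0)
    (hΨs : Ψs = Matrix.of fun q r =>
      if (q.1 : ℕ) = (r.1 : ℕ) then Ψd (q.1 : ℕ) q.2 r.2 else 0)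
    -- for every not-all-zero inter-layer coupling group,
    -- the concatenation [ξ_1 Ψ^{1,1}, …, ξ_M Ψ^{M,M}] is nonzero
    (hyp : ∀ (θ : ℂ) (ξ : ℕ → Fin N × Fin n → ℂ),
      (∃ j < M, ξ j ≠ 0) →
      (∀ K, 1 ≤ K → K < M →
        ξ K ᵥ* (θ • (1 : Matrix (Fin N × Fin n) (Fin N × Fin n) ℂ)
            - cmap (Φd K)) = 0) →
      ξ 0 ᵥ* (θ • (1 : Matrix (Fin N × Fin n) (Fin N × Fin n) ℂ)
            - cmap (Φd 0))
          = ∑ K ∈ Finset.Ico 1 M, ξ K ᵥ* cmap (Φcol K) →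
      ∃ j < M, ξ j ᵥ* cmap (Ψd j) ≠ 0) :
    Controllable Φs Ψs :=
  starStructure_controllable_general M N n p hM Φd Φcol Ψd Φs Ψs hΦs hΨs hyp
end
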